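/- Solutions of the EC(λ) scheme satisfy the discrete local energy conservation law: fix Δx > 0, Δt > 0, λ ∈ ℝ, and let u : ℤ × ℤ → ℝ be a grid function such that Ã(i,j) = 0 for all (i,j) ∈ ℤ × ℤ, where Ã(i,j) = (φ(i+1,j) − φ(i−1,j))/(2Δx) + (u(i,j+1) − u(i,j))/Δt and φ(i,j) = (1/3)·[(u(i,j)² + u(i,j+1)²)/2]·[(u(i,j) + u(i,j+1))/2] + (1/2)·Σ_{j'∈{j,j+1}} (u(i+1,j') − 2u(i,j') + u(i−1,j'))/Δx² + λ·Δx²·[ (u(i+1,j+1) − u(i−1,j+1)) − (u(i+1,j) − u(i−1,j)) ]/(2·Δx·Δt). Then with G̃₃(i,j) = u(i,j)⁴/12 + (1/2)·u(i,j)·(u(i+1,j) − 2u(i,j) + u(i−1,j))/Δx² and F̃₃(i,j) = (1/2)·[ φ(i−1,j)·φ(i,j) + (D_m μ_n u)(i−1,j)·(D_n μ_m u)(i−1,j) − (μ_m μ_n u)(i−1,j)·(D_m D_n u)(i−1,j) + λ·Δx²·(D_n u)(i,j)·(D_n u)(i−1,j) ], one has (F̃₃(i+1,j) − F̃₃(i,j))/Δx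 + (G̃₃(i,j+1) − G̃₃(i,j))/Δt = 0 for all (i,j) ∈ ℤ × ℤ. -/
import Mathlib


noncomputable section

/-- Forward difference in the first (space) index. -/
def Dm (dx : ℝ) (v : ℤ × ℤ → ℝ) : ℤ × ℤ → ℝ := fun p => (v (p.1 + 1, p.2) - v p) / dx

/-- Forward difference in the second (time) index. -/
def Dn (dt : ℝ) (v : ℤ × ℤ → ℝ) : ℤ × ℤ → ℝ := fun p => (v (p.1, p.2 + 1) - v p) / dt

/-- Forward average in the first (space) index. -/
def mum (v : ℤ × ℤ → ℝ) : ℤ × ℤ → ℝ := fun p => (v (p.1 + 1, p.2) + v p) / 2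

/-- Forward average in the second (time) index. -/
def mun (v : ℤ × ℤ → ℝ) : ℤ × ℤ → ℝ := fun p => (v (p.1, p.2 + 1) + v p) / 2

/-- The discrete characteristic `φ = Q̃₃` of the EC(λ) schemes. -/
def phiD (dx dt lam : ℝ) (u : ℤ × ℤ → ℝ) (i j : ℤ) : ℝ :=
  (1 / 3) * ((u (i, j) ^ 2 + u (i, j + 1) ^ 2) / 2) * ((u (i, j) + u (i, j + 1)) / 2)
  + (1 / 2) * ((u (i + 1, j) - 2 * u (i, j) + u (i - 1, j)) / dx ^ 2
             + (u (i + 1, j + 1) - 2 * u (i, j + 1) + u (i - 1, j + 1)) / dx ^ 2)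
  + lam * dx ^ 2 * ((u (i + 1, j + 1) - u (i - 1, j + 1)) - (u (i + 1, j) - u (i - 1, j)))
      / (2 * dx * dt)

/-- The EC(λ) finite difference scheme `Ã` for the mKdV equation. -/
def schemeA (dx dt lam : ℝ) (u : ℤ × ℤ → ℝ) (i j : ℤ) : ℝ :=
  (phiD dx dt lam u (i + 1) j - phiD dx dt lam u (i - 1) j) / (2 * dx)
  + (u (i, j + 1) - u (i, j)) / dt

/-- The discrete energy density `G̃₃`. -/
def G3D (dx : ℝ) (u : ℤ × ℤ → ℝ) (i j : ℤ) : ℝ :=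
  u (i, j) ^ 4 / 12
  + (1 / 2) * u (i, j) * ((u (i + 1, j) - 2 * u (i, j) + u (i - 1, j)) / dx ^ 2)

/-- The discrete energy flux `F̃₃`. -/
def F3D (dx dt lam : ℝ) (u : ℤ × ℤ → ℝ) (i j : ℤ) : ℝ :=
  (1 / 2) * (phiD dx dt lam u (i - 1) j * phiD dx dt lam u i j
    + Dm dx (mun u) (i - 1, j) * Dn dt (mum u) (i - 1, j)
    - mum (mun u) (i - 1, j) * Dm dx (Dn dt u) (i - 1, j)
    + lam * dx ^ 2 * Dn dt u (i, j) * Dn dt u (i - 1, j))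

/-- Solutions of the EC(λ) scheme satisfy the discrete local energy conservation law:
if `Ã(i,j) = 0` for all `(i,j)`, then `D_m(F̃₃) + D_n(G̃₃) = 0` for all `(i,j)`. -/
theorem EC_solutions_satisfy_discrete_energy_CL
    (dx dt lam : ℝ) (hdx : 0 < dx) (hdt : 0 < dt)
    (u : ℤ × ℤ → ℝ) (hsol : ∀ i j : ℤ, schemeA dx dt lam u i j = 0) :
    ∀ i j : ℤ,
      (F3D dx dt lam u (i + 1) j - F3D dx dt lam u i j) / dx
        + (G3D dx u i (j + 1) - G3D dx u i j) / dt = 0 := by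
  intro i j
  have h := hsol i j
  have key : (F3D dx dt lam u (i + 1) j - F3D dx dt lam u i j) / dx
        + (G3D dx u i (j + 1) - G3D dx u i j) / dt
      = phiD dx dt lam u i j * schemeA dx dt lam u i j := by
    simp only [F3D, G3D, phiD, schemeA, Dm, Dn, mum, mun,
      show i + 1 - 1 = i from by ring, show i - 1 + 1 = i from by ring,
      show (i:ℤ) + 1 + 1 = i + 2 from by ring]
    have hx := hdx.ne'
    have ht := hdt.ne'
    field_simp
    ring
  rw [key, h, mul_zero]
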